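/- arXiv:2201.03459 — 4 statements merged into one kernel-verified Lean document; each statement's English description precedes it below -/
import Mathlib

section
/- Let ψ₁,…,ψ_l be orthonormal vectors with (Bψ_r|ψ_s) = 0 for all r,s, and let χ₁,…,χ_l ∈ D(L) satisfy Lχ_r = Bψ_r, Bχ_r ⊥ Z₊ ⊕ Z₋, and (Bψ_r|χ_s) = (Lχ_r|χ_s) = α_rδ_rs with α_r = (Lχ_r|χ_r) > 0. Define χ̂_r := χ_r − Σ_{s=r+1}^{l} ((Bχ_r|χ_s)/α_s)ψ_s − ((Bχ_r|χ_r)/(2α_r))ψ_r for r = 1,…,l. Then Lχ̂_r = Bψ_r, Bχ̂_r ⊥ Z₊ ⊕ Z₋, (Bψ_r|χ̂_s) = α_rδ_rs, and (Bχ̂_r|χ̂_s) = 0 for all r,s ∈ {1,…,l}. -/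
open MeasureTheory Set Filter
open scoped RealInnerProductSpace ENNReal

noncomputable section

theorem statement12_aux
    {H : Type*} [NormedAddCommGroup H] [InnerProductSpace ℝ H]
    (L B : H →ₗ[ℝ] H) (DL DB : Submodule ℝ H)
    (hDLB : DL ≤ DB)
    (hBsym : ∀ x ∈ DB, ∀ y ∈ DB, ⟪B x, y⟫ = ⟪x, B y⟫)
    {nl l : ℕ} (φ : Fin nl → H) (ψ : Fin l → H)
    (hφmem : ∀ i, φ i ∈ DL)
    (hψmem : ∀ r, ψ r ∈ DL) (hψker : ∀ r, L (ψ r) = 0)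
    (hBψψ : ∀ r s, ⟪B (ψ r), ψ s⟫ = 0)
    (hBφψ : ∀ i r, ⟪B (φ i), ψ r⟫ = 0)
    (χ : Fin l → H) (αχ : Fin l → ℝ)
    (hχmem : ∀ r, χ r ∈ DL)
    (hχeq : ∀ r, L (χ r) = B (ψ r))
    (hχperp : ∀ r i, ⟪B (χ r), φ i⟫ = 0)
    (hαχpos : ∀ r, 0 < αχ r)
    (hBψχ : ∀ r s, ⟪B (ψ r), χ s⟫ = if r = s then αχ r else 0)
    (F : Fin l → H)
    (hF : ∀ r, F r = χ r - (∑ s ∈ Finset.univ.filter (fun s : Fin l => r < s),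
        (⟪B (χ r), χ s⟫ / αχ s) • ψ s) - (⟪B (χ r), χ r⟫ / (2 * αχ r)) • ψ r) :
    ∀ r : Fin l,
      F r ∈ DL ∧
      L (F r) = B (ψ r) ∧
      (∀ i, ⟪B (F r), φ i⟫ = 0) ∧
      (∀ t : Fin l, ⟪B (ψ t), F r⟫ = if t = r then αχ t else 0) ∧
      (∀ t : Fin l, ⟪B (F r), F t⟫ = 0) := by
  classical
  have symm : ∀ x ∈ DB, ∀ y ∈ DB, ⟪B x, y⟫ = ⟪B y, x⟫ := fun x hx y hy => by
    rw [hBsym x hx y hy, real_inner_comm]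
  have hFmem : ∀ r, F r ∈ DL := fun r => by
    rw [hF]
    exact DL.sub_mem (DL.sub_mem (hχmem r)
      (DL.sum_mem fun s _ => DL.smul_mem _ (hψmem s))) (DL.smul_mem _ (hψmem r))
  -- expansion lemmas
  have hBFy : ∀ r (y : H), ⟪B (F r), y⟫ = ⟪B (χ r), y⟫
      - (∑ s ∈ Finset.univ.filter (fun s : Fin l => r < s),
          (⟪B (χ r), χ s⟫ / αχ s) * ⟪B (ψ s), y⟫)
      - (⟪B (χ r), χ r⟫ / (2 * αχ r)) * ⟪B (ψ r), y⟫ := by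
    intro r y
    simp [hF, map_sub, map_sum, _root_.map_smul, inner_sub_left, sum_inner, real_inner_smul_left]
  have hxF : ∀ (x : H) r, ⟪x, F r⟫ = ⟪x, χ r⟫
      - (∑ s ∈ Finset.univ.filter (fun s : Fin l => r < s),
          (⟪B (χ r), χ s⟫ / αχ s) * ⟪x, ψ s⟫)
      - (⟪B (χ r), χ r⟫ / (2 * αχ r)) * ⟪x, ψ r⟫ := by
    intro x r
    simp [hF, inner_sub_right, inner_sum, real_inner_smul_right]
  -- part 4
  have key4 : ∀ r (t : Fin l), ⟪B (ψ t), F r⟫ = if t = r then αχ t else 0 := by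
    intro r t
    rw [hxF]
    simp [hBψχ, hBψψ]
  -- B-symmetry relations
  have hBχψ : ∀ (r u : Fin l), ⟪B (χ r), ψ u⟫ = if u = r then αχ u else 0 := by
    intro r u
    rw [symm _ (hDLB (hχmem r)) _ (hDLB (hψmem u))]
    exact hBψχ u r
  have hBχχ : ∀ (r t : Fin l), ⟪B (χ r), χ t⟫ = ⟪B (χ t), χ r⟫ := fun r t =>
    symm _ (hDLB (hχmem r)) _ (hDLB (hχmem t))
  have hsum : ∀ (r t : Fin l) (g : Fin l → ℝ),
      (∑ s ∈ Finset.univ.filter (fun s : Fin l => r < s),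
        g s * (if s = t then αχ s else 0)) = if r < t then g t * αχ t else 0 := by
    intro r t g
    simp [mul_ite, Finset.sum_ite_eq']
  intro r
  refine ⟨hFmem r, ?_, ?_, key4 r, ?_⟩
  · rw [hF]
    simp [map_sub, map_sum, _root_.map_smul, hψker, hχeq]
  · intro i
    rw [hBFy]
    have hψφ : ∀ s, ⟪B (ψ s), φ i⟫ = 0 := fun s => by
      rw [symm _ (hDLB (hψmem s)) _ (hDLB (hφmem i)), hBφψ]
    simp [hχperp, hψφ]
  · intro t
    rw [hBFy]
    have h1 : ⟪B (χ r), F t⟫ = ⟪B (χ r), χ t⟫ - (if t < r then ⟪B (χ r), χ t⟫ else 0)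
        - (⟪B (χ t), χ t⟫ / (2 * αχ t)) * (if t = r then αχ t else 0) := by
      rw [hxF]
      simp only [hBχψ]
      rw [hsum]
      by_cases h : t < r
      · rw [if_pos h, if_pos h, div_mul_cancel₀ _ (hαχpos r).ne', hBχχ t r]
      · rw [if_neg h, if_neg h]
    have h2 : (∑ s ∈ Finset.univ.filter (fun s : Fin l => r < s),
        (⟪B (χ r), χ s⟫ / αχ s) * ⟪B (ψ s), F t⟫)
        = if r < t then ⟪B (χ r), χ t⟫ else 0 := by
      have : (∑ s ∈ Finset.univ.filter (fun s : Fin l => r < s),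
          (⟪B (χ r), χ s⟫ / αχ s) * ⟪B (ψ s), F t⟫)
          = ∑ s ∈ Finset.univ.filter (fun s : Fin l => r < s),
            (⟪B (χ r), χ s⟫ / αχ s) * (if s = t then αχ s else 0) := by
        refine Finset.sum_congr rfl fun s _ => by rw [key4]
      rw [this, hsum]
      split_ifs with h
      · rw [div_mul_cancel₀ _ (hαχpos t).ne']
      · rfl
    have h3 : ⟪B (ψ r), F t⟫ = if r = t then αχ r else 0 := key4 t r
    rw [h1, h2, h3]
    rcases lt_trichotomy r t with h | h | h
    · simp [h, h.ne, h.ne', not_lt.mpr h.le]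
    · subst h
      simp only [lt_irrefl, eq_self_iff_true, if_true, if_false, sub_zero]
      have hh : ⟪B (χ r), χ r⟫ / (2 * αχ r) * αχ r = ⟪B (χ r), χ r⟫ / 2 := by
        rw [div_mul_eq_mul_div, mul_comm (2:ℝ) (αχ r), ← div_div, mul_div_assoc,
          div_self (hαχpos r).ne', mul_one]
      rw [hh]
      ring
    · simp [h, h.ne, h.ne', not_lt.mpr h.le]


/-- The Gram–Schmidt-type correction of Section 4: replacing `χ_r` by
`χ̂_r = χ_r - Σ_{s=r+1}^{l} ((Bχ_r|χ_s)/α_s) ψ_s - ((Bχ_r|χ_r)/(2α_r)) ψ_r`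
preserves `𝓛χ̂_r = Bψ_r`, `Bχ̂_r ⊥ Z₊ ⊕ Z₋` and `(Bψ_r|χ̂_s) = α_r δ_rs`, and in
addition achieves `(Bχ̂_r|χ̂_s) = 0` for all `r, s`. -/
theorem statement12
    {H : Type*} [NormedAddCommGroup H] [InnerProductSpace ℝ H] [CompleteSpace H]
    (L B : H →ₗ[ℝ] H) (DL DB : Submodule ℝ H)
    -- H1: `𝓛` is a densely defined, nonnegative, self-adjoint operator with closed range
    (hDense : Dense (DL : Set H))
    (hLsym : ∀ x ∈ DL, ∀ y ∈ DL, ⟪L x, y⟫ = ⟪x, L y⟫)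
    (hLnonneg : ∀ x ∈ DL, 0 ≤ ⟪L x, x⟫)
    (hLclosedRange : IsClosed (L '' (DL : Set H)))
    -- H2: `B` is self-adjoint and non-singular, with `D(𝓛) ⊆ D(B)`
    (hDLB : DL ≤ DB)
    (hBsym : ∀ x ∈ DB, ∀ y ∈ DB, ⟪B x, y⟫ = ⟪x, B y⟫)
    (hBinj : ∀ x ∈ DB, B x = 0 → x = 0)
    -- orthonormal basis `{φ_1,…,φ_{n-l}, ψ_1,…,ψ_l}` of `ker 𝓛` adapted to the
    -- quadratic form `(Bφ|φ)`, whose signature is `(k⁺, k⁻, l)`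
    (n l kp : ℕ) (hln : l ≤ n) (hkp : kp ≤ n - l)
    (φ : Fin (n - l) → H) (ψ : Fin l → H) (β : Fin (n - l) → ℝ)
    (hφmem : ∀ i, φ i ∈ DL) (hφker : ∀ i, L (φ i) = 0)
    (hψmem : ∀ r, ψ r ∈ DL) (hψker : ∀ r, L (ψ r) = 0)
    (hφon : ∀ i j, ⟪φ i, φ j⟫ = if i = j then 1 else 0)
    (hψon : ∀ r s, ⟪ψ r, ψ s⟫ = if r = s then 1 else 0)
    (hφψ : ∀ i r, ⟪φ i, ψ r⟫ = 0)
    (hBφφ : ∀ i j, ⟪B (φ i), φ j⟫ = if i = j then β i else 0)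
    (hβpos : ∀ i : Fin (n - l), (i : ℕ) < kp → 0 < β i)
    (hβneg : ∀ i : Fin (n - l), kp ≤ (i : ℕ) → β i < 0)
    (hBψψ : ∀ r s, ⟪B (ψ r), ψ s⟫ = 0)
    (hBφψ : ∀ i r, ⟪B (φ i), ψ r⟫ = 0)
    (hker_span : ∀ x ∈ DL, L x = 0 → x ∈ Submodule.span ℝ (Set.range φ ∪ Set.range ψ))
    -- `χ_r ∈ D(𝓛)` with `𝓛χ_r = Bψ_r`, `Bχ_r ⊥ Z₊ ⊕ Z₋` and `(Bψ_r|χ_s) = (𝓛χ_r|χ_s) = α_r δ_rs`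
    (χ : Fin l → H) (αχ : Fin l → ℝ)
    (hχmem : ∀ r, χ r ∈ DL)
    (hχeq : ∀ r, L (χ r) = B (ψ r))
    (hχperp : ∀ r i, ⟪B (χ r), φ i⟫ = 0)
    (hαχpos : ∀ r, 0 < αχ r)
    (hαχdef : ∀ r, αχ r = ⟪L (χ r), χ r⟫)
    (hBψχ : ∀ r s, ⟪B (ψ r), χ s⟫ = if r = s then αχ r else 0) :
    ∀ r : Fin l,
      (χ r - (∑ s ∈ Finset.univ.filter (fun s : Fin l => r < s),
          (⟪B (χ r), χ s⟫ / αχ s) • ψ s) - (⟪B (χ r), χ r⟫ / (2 * αχ r)) • ψ r) ∈ DL ∧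
      L (χ r - (∑ s ∈ Finset.univ.filter (fun s : Fin l => r < s),
          (⟪B (χ r), χ s⟫ / αχ s) • ψ s) - (⟪B (χ r), χ r⟫ / (2 * αχ r)) • ψ r) = B (ψ r) ∧
      (∀ i, ⟪B (χ r - (∑ s ∈ Finset.univ.filter (fun s : Fin l => r < s),
          (⟪B (χ r), χ s⟫ / αχ s) • ψ s) - (⟪B (χ r), χ r⟫ / (2 * αχ r)) • ψ r), φ i⟫ = 0) ∧
      (∀ t : Fin l, ⟪B (ψ t),
          χ r - (∑ s ∈ Finset.univ.filter (fun s : Fin l => r < s),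
            (⟪B (χ r), χ s⟫ / αχ s) • ψ s) - (⟪B (χ r), χ r⟫ / (2 * αχ r)) • ψ r⟫ =
        if t = r then αχ t else 0) ∧
      (∀ t : Fin l, ⟪B (χ r - (∑ s ∈ Finset.univ.filter (fun s : Fin l => r < s),
            (⟪B (χ r), χ s⟫ / αχ s) • ψ s) - (⟪B (χ r), χ r⟫ / (2 * αχ r)) • ψ r),
          χ t - (∑ s ∈ Finset.univ.filter (fun s : Fin l => t < s),
            (⟪B (χ t), χ s⟫ / αχ s) • ψ s) - (⟪B (χ t), χ t⟫ / (2 * αχ t)) • ψ t⟫ = 0) := by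
  exact fun r => statement12_aux L B DL DB hDLB hBsym φ ψ hφmem hψmem hψker hBψψ hBφψ
    χ αχ hχmem hχeq hχperp hαχpos hBψχ
    (fun r => χ r - (∑ s ∈ Finset.univ.filter (fun s : Fin l => r < s),
        (⟪B (χ r), χ s⟫ / αχ s) • ψ s) - (⟪B (χ r), χ r⟫ / (2 * αχ r)) • ψ r)
    (fun r => rfl) r
end
end

section
/- Assume the boundary operators satisfy H4(a): P : 𝔥₋ → 𝔥₊ is a bijective linear operator and R : 𝔥₊ → 𝔥₊ a linear operator with (|B|g|h)₋ = (BPg|Ph)₊ and (Rg|BRg)₊ ≤ (g|Bg)₊. Then for every g ∈ D(B) satisfying the boundary relation P₊g = RPP₋g one has (Bg|g) ≤ 0. The same conclusion holds under H4(b) (P the identity on 𝔥₋, R = 0), where the boundary relation is P₊g = 0. -/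
open MeasureTheory Set Filter
open scoped RealInnerProductSpace ENNReal

noncomputable section

/-- Sign of the boundary term: under H4(a) (with
`(|B|g|h)₋ = (BPg|Ph)₊` and `(Rg|BRg)₊ ≤ (g|Bg)₊`), any `g ∈ D(B)` satisfying the
boundary relation `P₊ g = R P P₋ g` has `(Bg|g) ≤ 0`; the same conclusion holds under
H4(b), where the boundary relation reads `P₊ g = 0`. -/
theorem statement13
    {H : Type*} [NormedAddCommGroup H] [InnerProductSpace ℝ H] [CompleteSpace H]
    (B : H →ₗ[ℝ] H) (DB : Submodule ℝ H)
    -- `B` self-adjoint and non-singular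
    (hBsym : ∀ x ∈ DB, ∀ y ∈ DB, ⟪B x, y⟫ = ⟪x, B y⟫)
    (hBinj : ∀ x ∈ DB, B x = 0 → x = 0)
    -- `P₊, P₋`: spectral projections of `B` for `[0,∞)` resp. `(-∞,0)`
    (Pp Pm : H →L[ℝ] H)
    (hPsum : ∀ x, Pp x + Pm x = x)
    (hPpIdem : ∀ x, Pp (Pp x) = Pp x)
    (hPmIdem : ∀ x, Pm (Pm x) = Pm x)
    (hPpSym : ∀ x y, ⟪Pp x, y⟫ = ⟪x, Pp y⟫)
    (hPmSym : ∀ x y, ⟪Pm x, y⟫ = ⟪x, Pm y⟫)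
    (hPpB : ∀ x ∈ DB, Pp x ∈ DB ∧ B (Pp x) = Pp (B x))
    (hPmB : ∀ x ∈ DB, Pm x ∈ DB ∧ B (Pm x) = Pm (B x))
    (hPpPos : ∀ x ∈ DB, 0 ≤ ⟪B (Pp x), Pp x⟫)
    (hPmNeg : ∀ x ∈ DB, ⟪B (Pm x), Pm x⟫ ≤ 0)
    -- boundary operators satisfying H4(a)
    (P R : H →ₗ[ℝ] H)
    (hPbij : Set.BijOn P (Set.range Pm) (Set.range Pp))
    (hRrange : ∀ x, R (Pp x) ∈ Set.range Pp)
    (hPiso : ∀ g h, ⟪-(B (Pm g)), Pm h⟫ = ⟪B (P (Pm g)), P (Pm h)⟫)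
    (hRcontr : ∀ g, ⟪R (Pp g), B (R (Pp g))⟫ ≤ ⟪Pp g, B (Pp g)⟫) :
    (∀ g ∈ DB, Pp g = R (P (Pm g)) → ⟪B g, g⟫ ≤ 0) ∧
    (∀ g ∈ DB, Pp g = 0 → ⟪B g, g⟫ ≤ 0) := by

  have hPmEq : ∀ x, Pm x = x - Pp x := by
    intro x; have := hPsum x; abel_nf; linear_combination (norm := abel) this
  have hPpPm : ∀ x, Pp (Pm x) = 0 := by
    intro x; rw [hPmEq, map_sub, hPpIdem, sub_self]
  have hPmPp : ∀ x, Pm (Pp x) = 0 := by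
    intro x; rw [hPmEq, hPpIdem, sub_self]
  have hdecomp : ∀ g ∈ DB, ⟪B g, g⟫ = ⟪B (Pp g), Pp g⟫ + ⟪B (Pm g), Pm g⟫ := by
    intro g hg
    have h1 := (hPpB g hg).2
    have h2 := (hPmB g hg).2
    have hc1 : ⟪B (Pp g), Pm g⟫ = 0 := by
      rw [h1, hPpSym, hPpPm, inner_zero_right]
    have hc2 : ⟪B (Pm g), Pp g⟫ = 0 := by
      rw [h2, hPmSym, hPmPp, inner_zero_right]
    conv_lhs => rw [← hPsum g]
    rw [map_add, inner_add_left, inner_add_right, inner_add_right, hc1, hc2]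
    ring
  constructor
  · intro g hg hb
    obtain ⟨y, hy⟩ : P (Pm g) ∈ Set.range Pp := hPbij.mapsTo ⟨g, rfl⟩
    have hr := hRcontr y
    rw [hy, ← hb] at hr
    have hiso := hPiso g g
    rw [inner_neg_left] at hiso
    rw [hdecomp g hg]
    have hcm : ⟪B (P (Pm g)), P (Pm g)⟫ = ⟪P (Pm g), B (P (Pm g))⟫ := real_inner_comm _ _
    have hcp : ⟪B (Pp g), Pp g⟫ = ⟪Pp g, B (Pp g)⟫ := real_inner_comm _ _
    linarith
  · intro g hg hb
    rw [hdecomp g hg, hb]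
    have : ⟪B (0 : H), (0 : H)⟫ = 0 := by simp
    linarith [hPmNeg g hg]
end
end

section
/- Let φ₁,…,φ_k ∈ D(B) satisfy (Bφ_i|φ_j) = β_iδ_ij with β_i < 0 for all i. Set β_i⁻ := (|B|P₋φ_i|P₋φ_i) and β̂_max := max_i β_i⁻/|β_i| (so β̂_max ≥ 1, since β_i = (BP₊φ_i|P₊φ_i) − β_i⁻ < 0). Then for every ε with 0 < ε ≤ 1/(2√(β̂_max − 1/2)), every h ∈ D(B), and every q = Σ_{i=1}^{k} b_iφ_i with b_i ∈ ℝ, one has (1/2)(Bq|q) + 2(Bh|q) ≤ (k/ε²)(|B|h|h). -/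
open scoped RealInnerProductSpace

/-!
Split `(B·|·)` along `P₊ + P₋ = 1` into the two semidefinite forms `(BP₊·|P₊·)` and
`(−BP₋·|P₋·)`, whose sum is `(|B|·|·)`. Young's inequality for each of them gives
`2(Bh|bφ_i) ≤ ε⁻²(|B|h|h) + ε² b² (|B|φ_i|φ_i)`, and the bound on `ε` is exactly what makes
`ε² (|B|φ_i|φ_i) ≤ −β_i/2`, so the term `b_i² β_i / 2` of `(1/2)(Bq|q)` absorbs the error.
Summing over the `k` indices gives the factor `k`.
-/

namespace LinearMap.BilinForm

variable {E : Type*} [AddCommGroup E] [Module ℝ E]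

theorem two_mul_le_of_nonneg_on (f : LinearMap.BilinForm ℝ E) {S : Submodule ℝ E}
    (hsymm : ∀ x ∈ S, ∀ y ∈ S, f x y = f y x) (hpos : ∀ x ∈ S, 0 ≤ f x x)
    {x y : E} (hx : x ∈ S) (hy : y ∈ S) {c : ℝ} (hc : 0 < c) :
    2 * f x y ≤ c * f x x + c⁻¹ * f y y := by
  have h := hpos _ (S.sub_mem (S.smul_mem c hx) hy)
  simp only [map_sub, map_smul, LinearMap.sub_apply, LinearMap.smul_apply, smul_eq_mul,
    hsymm y hy x hx] at h
  rw [← mul_le_mul_iff_right₀ hc, mul_add, mul_inv_cancel_left₀ hc.ne']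
  linarith

end LinearMap.BilinForm

section

variable {H : Type*} [NormedAddCommGroup H] [InnerProductSpace ℝ H]

noncomputable def projForm (B P : H →ₗ[ℝ] H) : LinearMap.BilinForm ℝ H :=
  (innerₗ H).compl₁₂ (B ∘ₗ P) P

@[simp]
theorem projForm_apply (B P : H →ₗ[ℝ] H) (x y : H) : projForm B P x y = ⟪B (P x), P y⟫ :=
  rfl

theorem inner_map_proj_proj {B : H →ₗ[ℝ] H} {P : H →L[ℝ] H}
    (hsym : ∀ x y, ⟪P x, y⟫ = ⟪x, P y⟫) (hidem : ∀ x, P (P x) = P x)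
    {x : H} (hcomm : B (P x) = P (B x)) (y : H) : ⟪B (P x), P y⟫ = ⟪B x, P y⟫ := by
  rw [hcomm, hsym, hidem]

theorem projForm_symm_on {B P : H →ₗ[ℝ] H} {S : Submodule ℝ H}
    (hBsym : ∀ x ∈ S, ∀ y ∈ S, ⟪B x, y⟫ = ⟪x, B y⟫) (hP : ∀ x ∈ S, P x ∈ S) :
    ∀ x ∈ S, ∀ y ∈ S, projForm B P x y = projForm B P y x := fun x hx y hy => by
  rw [projForm_apply, projForm_apply, hBsym _ (hP x hx) _ (hP y hy), real_inner_comm]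

theorem inner_map_eq_projForm_add {B : H →ₗ[ℝ] H} {Pp Pm : H →L[ℝ] H}
    (hPsum : ∀ x, Pp x + Pm x = x)
    (hPpIdem : ∀ x, Pp (Pp x) = Pp x) (hPmIdem : ∀ x, Pm (Pm x) = Pm x)
    (hPpSym : ∀ x y, ⟪Pp x, y⟫ = ⟪x, Pp y⟫) (hPmSym : ∀ x y, ⟪Pm x, y⟫ = ⟪x, Pm y⟫)
    {x : H} (hPpB : B (Pp x) = Pp (B x)) (hPmB : B (Pm x) = Pm (B x)) (y : H) :
    ⟪B x, y⟫ = projForm B Pp x y + projForm B Pm x y := by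
  simp only [projForm_apply, ContinuousLinearMap.coe_coe,
    inner_map_proj_proj hPpSym hPpIdem hPpB, inner_map_proj_proj hPmSym hPmIdem hPmB]
  rw [← inner_add_right, hPsum]

theorem two_mul_inner_map_le {B : H →ₗ[ℝ] H} {DB : Submodule ℝ H}
    (hBsym : ∀ x ∈ DB, ∀ y ∈ DB, ⟪B x, y⟫ = ⟪x, B y⟫) {Pp Pm : H →L[ℝ] H}
    (hPsum : ∀ x, Pp x + Pm x = x)
    (hPpIdem : ∀ x, Pp (Pp x) = Pp x) (hPmIdem : ∀ x, Pm (Pm x) = Pm x)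
    (hPpSym : ∀ x y, ⟪Pp x, y⟫ = ⟪x, Pp y⟫) (hPmSym : ∀ x y, ⟪Pm x, y⟫ = ⟪x, Pm y⟫)
    (hPpB : ∀ x ∈ DB, Pp x ∈ DB ∧ B (Pp x) = Pp (B x))
    (hPmB : ∀ x ∈ DB, Pm x ∈ DB ∧ B (Pm x) = Pm (B x))
    (hPpPos : ∀ x ∈ DB, 0 ≤ ⟪B (Pp x), Pp x⟫) (hPmNeg : ∀ x ∈ DB, ⟪B (Pm x), Pm x⟫ ≤ 0)
    {x y : H} (hx : x ∈ DB) (hy : y ∈ DB) {c : ℝ} (hc : 0 < c) :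
    2 * ⟪B x, y⟫ ≤ c * (⟪B (Pp x), Pp x⟫ - ⟪B (Pm x), Pm x⟫) +
      c⁻¹ * (⟪B (Pp y), Pp y⟫ - ⟪B (Pm y), Pm y⟫) := by
  have hP := (projForm B Pp).two_mul_le_of_nonneg_on
    (projForm_symm_on hBsym fun z hz => (hPpB z hz).1) hPpPos hx hy hc
  have hM := (-projForm B Pm).two_mul_le_of_nonneg_on
    (fun u hu v hv => by
      simp only [LinearMap.neg_apply, projForm_symm_on hBsym (fun z hz => (hPmB z hz).1) u hu v hv])
    (fun z hz => by simpa using hPmNeg z hz) hx (DB.neg_mem hy) hc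
  rw [inner_map_eq_projForm_add hPsum hPpIdem hPmIdem hPpSym hPmSym (hPpB x hx).2 (hPmB x hx).2]
  simp only [projForm_apply, ContinuousLinearMap.coe_coe, LinearMap.neg_apply, map_neg,
    neg_neg] at hP hM ⊢
  linarith

theorem inner_map_sum_smul_sum_smul_of_diag {ι : Type*} [Fintype ι] [DecidableEq ι]
    (B : H →ₗ[ℝ] H) {φ : ι → H} {β : ι → ℝ}
    (hBφφ : ∀ i j, ⟪B (φ i), φ j⟫ = if i = j then β i else 0) (b : ι → ℝ) :
    ⟪B (∑ i, b i • φ i), ∑ i, b i • φ i⟫ = ∑ i, b i ^ 2 * β i := by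
  simp only [map_sum, map_smul, sum_inner, inner_sum, real_inner_smul_left,
    real_inner_smul_right, hBφφ, mul_ite, mul_zero, Finset.sum_ite_eq', Finset.mem_univ, if_true]
  exact Finset.sum_congr rfl fun i _ => by ring

end

theorem sq_mul_two_mul_sub_one_le_half {ε R : ℝ} (hε : 0 < ε)
    (hεR : ε ≤ 1 / (2 * Real.sqrt (R - 1 / 2))) : ε ^ 2 * (2 * R - 1) ≤ 1 / 2 := by
  rcases le_or_gt R (1 / 2) with hR | hR
  · nlinarith [sq_nonneg ε]
  have hs : 0 < Real.sqrt (R - 1 / 2) := Real.sqrt_pos.mpr (by linarith)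
  have hsq : Real.sqrt (R - 1 / 2) ^ 2 = R - 1 / 2 := Real.sq_sqrt (by linarith)
  rw [le_div_iff₀ (by positivity)] at hεR
  nlinarith [mul_self_le_mul_self (by positivity) hεR]

theorem half_add_sq_mul_sub_nonpos {β p n R ε : ℝ} (hβ : β < 0) (hβpn : β = p + n)
    (hnR : -n / |β| ≤ R) (hεR : ε ^ 2 * (2 * R - 1) ≤ 1 / 2) :
    β / 2 + ε ^ 2 * (p - n) ≤ 0 := by
  rw [abs_of_neg hβ, div_le_iff₀ (neg_pos.mpr hβ)] at hnR
  nlinarith [mul_le_mul_of_nonneg_left hnR (sq_nonneg ε),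
    mul_le_mul_of_nonneg_right hεR (neg_pos.mpr hβ).le]

theorem statement14_general
    {H : Type*} [NormedAddCommGroup H] [InnerProductSpace ℝ H]
    (B : H →ₗ[ℝ] H) (DB : Submodule ℝ H)
    -- `B` self-adjoint and non-singular
    (hBsym : ∀ x ∈ DB, ∀ y ∈ DB, ⟪B x, y⟫ = ⟪x, B y⟫)
    -- `P₊, P₋`: spectral projections of `B` for `[0,∞)` resp. `(-∞,0)`
    (Pp Pm : H →L[ℝ] H)
    (hPsum : ∀ x, Pp x + Pm x = x)
    (hPpIdem : ∀ x, Pp (Pp x) = Pp x)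
    (hPmIdem : ∀ x, Pm (Pm x) = Pm x)
    (hPpSym : ∀ x y, ⟪Pp x, y⟫ = ⟪x, Pp y⟫)
    (hPmSym : ∀ x y, ⟪Pm x, y⟫ = ⟪x, Pm y⟫)
    (hPpB : ∀ x ∈ DB, Pp x ∈ DB ∧ B (Pp x) = Pp (B x))
    (hPmB : ∀ x ∈ DB, Pm x ∈ DB ∧ B (Pm x) = Pm (B x))
    (hPpPos : ∀ x ∈ DB, 0 ≤ ⟪B (Pp x), Pp x⟫)
    (hPmNeg : ∀ x ∈ DB, ⟪B (Pm x), Pm x⟫ ≤ 0)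
    -- the family `φ_1,…,φ_k` diagonalizing `B` with negative diagonal entries
    (k : ℕ) (hk : 0 < k) (φ : Fin k → H) (β : Fin k → ℝ)
    (hφmem : ∀ i, φ i ∈ DB)
    (hBφφ : ∀ i j, ⟪B (φ i), φ j⟫ = if i = j then β i else 0)
    (hβneg : ∀ i, β i < 0) :
    ∀ ε : ℝ, 0 < ε →
      ε ≤ 1 / (2 * Real.sqrt
        ((Finset.univ.sup' (Finset.univ_nonempty_iff.mpr (Fin.pos_iff_nonempty.mp hk))
          fun i => (-⟪B (Pm (φ i)), Pm (φ i)⟫) / |β i|) - 1 / 2)) →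
      ∀ h ∈ DB, ∀ b : Fin k → ℝ,
        (1 / 2) * ⟪B (∑ i, b i • φ i), ∑ i, b i • φ i⟫ +
            2 * ⟪B h, ∑ i, b i • φ i⟫ ≤
          ((k : ℝ) / ε ^ 2) * (⟪B (Pp h), Pp h⟫ - ⟪B (Pm h), Pm h⟫) := by
  intro ε hε hεR h hh b
  have hε2 := sq_mul_two_mul_sub_one_le_half hε hεR
  have hterm : ∀ i, 1 / 2 * (b i ^ 2 * β i) + 2 * ⟪B h, b i • φ i⟫ ≤
      1 / ε ^ 2 * (⟪B (Pp h), Pp h⟫ - ⟪B (Pm h), Pm h⟫) := fun i => by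
    have hyoung := two_mul_inner_map_le hBsym hPsum hPpIdem hPmIdem hPpSym hPmSym hPpB hPmB
      hPpPos hPmNeg hh (DB.smul_mem (b i) (hφmem i)) (c := (ε ^ 2)⁻¹) (by positivity)
    have hβ : β i = ⟪B (Pp (φ i)), Pp (φ i)⟫ + ⟪B (Pm (φ i)), Pm (φ i)⟫ := by
      simpa [hBφφ] using inner_map_eq_projForm_add hPsum hPpIdem hPmIdem hPpSym hPmSym
        (hPpB _ (hφmem i)).2 (hPmB _ (hφmem i)).2 (φ i)
    have hdiag := half_add_sq_mul_sub_nonpos (hβneg i) hβ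
      (Finset.le_sup' (fun i => (-⟪B (Pm (φ i)), Pm (φ i)⟫) / |β i|) (Finset.mem_univ i)) hε2
    simp only [map_smul, real_inner_smul_left, real_inner_smul_right,
      inv_inv, one_div] at hyoung ⊢
    linarith [mul_le_mul_of_nonneg_left hdiag (sq_nonneg (b i))]
  rw [inner_map_sum_smul_sum_smul_of_diag B hBφφ, inner_sum, Finset.mul_sum, Finset.mul_sum,
    ← Finset.sum_add_distrib]
  calc _ ≤ ∑ _i : Fin k, 1 / ε ^ 2 * (⟪B (Pp h), Pp h⟫ - ⟪B (Pm h), Pm h⟫) :=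
        Finset.sum_le_sum fun i _ => hterm i
    _ = _ := by rw [Finset.sum_const, Finset.card_univ, Fintype.card_fin, nsmul_eq_mul]; ring

/-- The key estimate (4.8)/(4.9) of Lemma 4.1: if `(Bφ_i|φ_j) = β_i δ_ij` with
`β_i < 0`, and `β̂_max = max_i β_i⁻/|β_i|` with `β_i⁻ = (|B|P₋φ_i|P₋φ_i)`, then for
`0 < ε ≤ 1/(2√(β̂_max - 1/2))`, all `h ∈ D(B)` and all `q = Σ b_i φ_i`,
`(1/2)(Bq|q) + 2(Bh|q) ≤ (k/ε²)(|B|h|h)`. -/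
theorem statement14
    {H : Type*} [NormedAddCommGroup H] [InnerProductSpace ℝ H] [CompleteSpace H]
    (B : H →ₗ[ℝ] H) (DB : Submodule ℝ H)
    -- `B` self-adjoint and non-singular
    (hBsym : ∀ x ∈ DB, ∀ y ∈ DB, ⟪B x, y⟫ = ⟪x, B y⟫)
    (hBinj : ∀ x ∈ DB, B x = 0 → x = 0)
    -- `P₊, P₋`: spectral projections of `B` for `[0,∞)` resp. `(-∞,0)`
    (Pp Pm : H →L[ℝ] H)
    (hPsum : ∀ x, Pp x + Pm x = x)
    (hPpIdem : ∀ x, Pp (Pp x) = Pp x)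
    (hPmIdem : ∀ x, Pm (Pm x) = Pm x)
    (hPpSym : ∀ x y, ⟪Pp x, y⟫ = ⟪x, Pp y⟫)
    (hPmSym : ∀ x y, ⟪Pm x, y⟫ = ⟪x, Pm y⟫)
    (hPpB : ∀ x ∈ DB, Pp x ∈ DB ∧ B (Pp x) = Pp (B x))
    (hPmB : ∀ x ∈ DB, Pm x ∈ DB ∧ B (Pm x) = Pm (B x))
    (hPpPos : ∀ x ∈ DB, 0 ≤ ⟪B (Pp x), Pp x⟫)
    (hPmNeg : ∀ x ∈ DB, ⟪B (Pm x), Pm x⟫ ≤ 0)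
    -- the family `φ_1,…,φ_k` diagonalizing `B` with negative diagonal entries
    (k : ℕ) (hk : 0 < k) (φ : Fin k → H) (β : Fin k → ℝ)
    (hφmem : ∀ i, φ i ∈ DB)
    (hBφφ : ∀ i j, ⟪B (φ i), φ j⟫ = if i = j then β i else 0)
    (hβneg : ∀ i, β i < 0) :
    ∀ ε : ℝ, 0 < ε →
      ε ≤ 1 / (2 * Real.sqrt
        ((Finset.univ.sup' (Finset.univ_nonempty_iff.mpr (Fin.pos_iff_nonempty.mp hk))
          fun i => (-⟪B (Pm (φ i)), Pm (φ i)⟫) / |β i|) - 1 / 2)) →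
      ∀ h ∈ DB, ∀ b : Fin k → ℝ,
        (1 / 2) * ⟪B (∑ i, b i • φ i), ∑ i, b i • φ i⟫ +
            2 * ⟪B h, ∑ i, b i • φ i⟫ ≤
          ((k : ℝ) / ε ^ 2) * (⟪B (Pp h), Pp h⟫ - ⟪B (Pm h), Pm h⟫) :=
  statement14_general B DB hBsym Pp Pm hPsum hPpIdem hPmIdem hPpSym hPmSym hPpB hPmB hPpPos hPmNeg k
    hk φ β hφmem hBφφ hβneg
end

section
/- For every real s > 0 and every λ > 0, (2/Γ(s/2+1)) ∫_λ^∞ r^{s+1} e^{r²}/(e^{r²}−1)² dr = (1/Γ(s/2+1)) · λ^s/(e^{λ²}−1) + (1/Γ(s/2)) ∫_{λ²}^∞ r^{s/2−1}/(e^r−1) dr. -/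
/-!
Substituting `u = r²` turns the left-hand integral into `½ ∫_{λ²}^∞ u^{s/2} eᵘ/(eᵘ-1)² du`.
Integrating by parts against `v = -1/(eᵘ-1)` gives
`λ^s/(e^{λ²}-1) + (s/2) ∫_{λ²}^∞ u^{s/2-1}/(eᵘ-1) du`,
and `Γ(s/2+1) = (s/2) Γ(s/2)` produces the stated normalisation.
Away from `0`, `1/(eᵘ-1)` is dominated by a multiple of `e^{-u}`,
so every integral involved is controlled by a Gamma integral.
-/

open MeasureTheory Set

open Real Filter Topology

lemma exp_sub_one_pos {x : ℝ} (hx : 0 < x) : 0 < exp x - 1 :=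
  sub_pos.2 (one_lt_exp_iff.2 hx)

lemma one_sub_exp_neg_mul_exp_le {c x : ℝ} (hcx : c ≤ x) :
    (1 - exp (-c)) * exp x ≤ exp x - 1 := by
  rw [sub_mul, one_mul, ← exp_add]
  linarith [one_le_exp (show 0 ≤ -c + x by linarith)]

lemma inv_exp_sub_one_le {c x : ℝ} (hc : 0 < c) (hcx : c ≤ x) :
    (exp x - 1)⁻¹ ≤ (1 - exp (-c))⁻¹ * exp (-x) := by
  have hK : 0 < 1 - exp (-c) := sub_pos.2 (exp_lt_one_iff.2 (neg_lt_zero.2 hc))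
  rw [exp_neg x, ← mul_inv]
  exact inv_anti₀ (by positivity) (one_sub_exp_neg_mul_exp_le hcx)

lemma exp_div_exp_sub_one_sq_le {c x : ℝ} (hc : 0 < c) (hcx : c ≤ x) :
    exp x / (exp x - 1) ^ 2 ≤ (1 - exp (-c))⁻¹ ^ 2 * exp (-x) := by
  have hx := exp_sub_one_pos (hc.trans_le hcx)
  calc exp x / (exp x - 1) ^ 2 = exp x * (exp x - 1)⁻¹ ^ 2 := by rw [inv_pow, div_eq_mul_inv]
    _ ≤ exp x * ((1 - exp (-c))⁻¹ * exp (-x)) ^ 2 := by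
      gcongr
      exact inv_exp_sub_one_le hc hcx
    _ = (1 - exp (-c))⁻¹ ^ 2 * exp (-x) := by
      rw [mul_pow, exp_neg x]
      field_simp

lemma integrableOn_Ioi_of_norm_le_rpow_mul_exp_neg {f : ℝ → ℝ} {c p K : ℝ} (hc : 0 ≤ c)
    (hp : -1 < p) (hf : ContinuousOn f (Ioi c))
    (hle : ∀ x ∈ Ioi c, ‖f x‖ ≤ K * (exp (-x) * x ^ p)) :
    IntegrableOn f (Ioi c) := by
  have hGamma : IntegrableOn (fun x => exp (-x) * x ^ p) (Ioi 0) := by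
    simpa using GammaIntegral_convergent (show 0 < p + 1 by linarith)
  exact ((hGamma.mono_set (Ioi_subset_Ioi hc)).const_mul K).mono'
    (hf.aestronglyMeasurable measurableSet_Ioi)
    ((ae_restrict_iff' measurableSet_Ioi).2 (ae_of_all _ hle))

lemma integrableOn_rpow_div_exp_sub_one {p c : ℝ} (hp : -1 < p) (hc : 0 < c) :
    IntegrableOn (fun x => x ^ p / (exp x - 1)) (Ioi c) := by
  refine integrableOn_Ioi_of_norm_le_rpow_mul_exp_neg hc.le hp (K := (1 - exp (-c))⁻¹) ?_ ?_
  · exact (continuousOn_id.rpow_const fun x hx => Or.inl (hc.trans hx).ne').div (by fun_prop)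
      fun x hx => (exp_sub_one_pos (hc.trans hx)).ne'
  · intro x hx
    have hx0 : 0 < x := hc.trans hx
    rw [norm_of_nonneg (div_nonneg (rpow_nonneg hx0.le p) (exp_sub_one_pos hx0).le)]
    calc x ^ p / (exp x - 1) = x ^ p * (exp x - 1)⁻¹ := div_eq_mul_inv _ _
      _ ≤ x ^ p * ((1 - exp (-c))⁻¹ * exp (-x)) :=
        mul_le_mul_of_nonneg_left (inv_exp_sub_one_le hc hx.out.le) (rpow_nonneg hx0.le p)
      _ = (1 - exp (-c))⁻¹ * (exp (-x) * x ^ p) := by ring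

lemma integrableOn_rpow_mul_exp_div_exp_sub_one_sq {p c : ℝ} (hp : -1 < p) (hc : 0 < c) :
    IntegrableOn (fun x => x ^ p * (exp x / (exp x - 1) ^ 2)) (Ioi c) := by
  refine integrableOn_Ioi_of_norm_le_rpow_mul_exp_neg hc.le hp (K := (1 - exp (-c))⁻¹ ^ 2) ?_ ?_
  · exact (continuousOn_id.rpow_const fun x hx => Or.inl (hc.trans hx).ne').mul
      (continuous_exp.continuousOn.div (by fun_prop)
        fun x hx => pow_ne_zero 2 (exp_sub_one_pos (hc.trans hx)).ne')
  · intro x hx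
    have hx0 : 0 < x := hc.trans hx
    rw [norm_of_nonneg (by positivity)]
    calc x ^ p * (exp x / (exp x - 1) ^ 2) ≤ x ^ p * ((1 - exp (-c))⁻¹ ^ 2 * exp (-x)) :=
        mul_le_mul_of_nonneg_left (exp_div_exp_sub_one_sq_le hc hx.out.le) (rpow_nonneg hx0.le p)
      _ = (1 - exp (-c))⁻¹ ^ 2 * (exp (-x) * x ^ p) := by ring

lemma tendsto_rpow_div_exp_sub_one_atTop (a : ℝ) :
    Tendsto (fun x => x ^ a / (exp x - 1)) atTop (𝓝 0) := by
  have hdecay := (tendsto_rpow_mul_exp_neg_mul_atTop_nhds_zero a 1 one_pos).const_mul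
    (1 - exp (-1))⁻¹
  rw [mul_zero] at hdecay
  refine tendsto_of_tendsto_of_tendsto_of_le_of_le' tendsto_const_nhds hdecay ?_ ?_
  · filter_upwards [eventually_gt_atTop 0] with x hx
    exact div_nonneg (rpow_nonneg hx.le a) (exp_sub_one_pos hx).le
  · filter_upwards [eventually_ge_atTop 1] with x hx
    calc x ^ a / (exp x - 1) = x ^ a * (exp x - 1)⁻¹ := div_eq_mul_inv _ _
      _ ≤ x ^ a * ((1 - exp (-1))⁻¹ * exp (-x)) :=
        mul_le_mul_of_nonneg_left (inv_exp_sub_one_le one_pos hx) (by positivity)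
      _ = (1 - exp (-1))⁻¹ * (x ^ a * exp (-1 * x)) := by rw [neg_one_mul]; ring

theorem integral_Ioi_rpow_mul_exp_div_exp_sub_one_sq {a c : ℝ} (ha : 0 < a) (hc : 0 < c) :
    ∫ x in Ioi c, x ^ a * (exp x / (exp x - 1) ^ 2) =
      c ^ a / (exp c - 1) + a * ∫ x in Ioi c, x ^ (a - 1) / (exp x - 1) := by
  have hu : ∀ x ∈ Ioi c, HasDerivAt (fun x => x ^ a) (a * x ^ (a - 1)) x :=
    fun x hx => hasDerivAt_rpow_const (Or.inl (hc.trans hx).ne')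
  have hv : ∀ x ∈ Ioi c, HasDerivAt (fun x => -(exp x - 1)⁻¹) (exp x / (exp x - 1) ^ 2) x :=
    fun x hx => (((hasDerivAt_exp x).sub_const 1).inv (exp_sub_one_pos (hc.trans hx)).ne').neg
      |>.congr_deriv (by ring)
  have huv' : IntegrableOn ((fun x => x ^ a) * fun x => exp x / (exp x - 1) ^ 2) (Ioi c) :=
    integrableOn_rpow_mul_exp_div_exp_sub_one_sq (by linarith) hc
  have hu'v : IntegrableOn ((fun x => a * x ^ (a - 1)) * fun x => -(exp x - 1)⁻¹) (Ioi c) := by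
    refine IntegrableOn.congr_fun
      ((integrableOn_rpow_div_exp_sub_one (p := a - 1) (by linarith) hc).const_mul (-a))
      (fun x _ => ?_) measurableSet_Ioi
    simp only [Pi.mul_apply]
    ring
  have h_zero : Tendsto ((fun x => x ^ a) * fun x => -(exp x - 1)⁻¹) (𝓝[>] c)
      (𝓝 (-(c ^ a / (exp c - 1)))) := by
    have hcont : ContinuousAt ((fun x => x ^ a) * fun x => -(exp x - 1)⁻¹) c :=
      (continuousAt_rpow_const _ _ (Or.inl hc.ne')).mul
        ((continuous_exp.continuousAt.sub continuousAt_const).inv₀ (exp_sub_one_pos hc).ne').neg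
    convert hcont.tendsto.mono_left nhdsWithin_le_nhds using 2
    simp only [Pi.mul_apply]
    ring
  have h_infty : Tendsto ((fun x => x ^ a) * fun x => -(exp x - 1)⁻¹) atTop (𝓝 0) := by
    have := (tendsto_rpow_div_exp_sub_one_atTop a).neg
    rw [neg_zero] at this
    exact this.congr fun x => by simp only [Pi.mul_apply]; ring
  rw [integral_Ioi_mul_deriv_eq_deriv_mul hu hv huv' hu'v h_zero h_infty, zero_sub, neg_neg,
    ← integral_const_mul, sub_eq_add_neg, ← integral_neg]
  congr 1
  refine setIntegral_congr_fun measurableSet_Ioi fun x _ => ?_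
  ring

theorem integral_Ioi_mul_comp_sq {E : Type*} [NormedAddCommGroup E] [NormedSpace ℝ E]
    (g : ℝ → E) {a : ℝ} (ha : 0 ≤ a) :
    ∫ x in Ioi a, (2 * x) • g (x ^ 2) = ∫ y in Ioi (a ^ 2), g y := by
  have himage : (fun x : ℝ => x ^ 2) '' Ioi a = Ioi (a ^ 2) := by
    ext y
    constructor
    · rintro ⟨x, hx, rfl⟩
      exact pow_lt_pow_left₀ hx ha two_ne_zero
    · intro hy
      exact ⟨√y, (lt_sqrt ha).2 hy, sq_sqrt ((sq_nonneg a).trans hy.le)⟩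
  rw [← himage, integral_image_eq_integral_abs_deriv_smul measurableSet_Ioi
    (fun x _ => by simpa using (hasDerivAt_pow 2 x).hasDerivWithinAt)
    ((pow_left_strictMonoOn₀ two_ne_zero).injOn.mono fun x hx => ha.trans hx.out.le)]
  refine setIntegral_congr_fun measurableSet_Ioi fun x hx => ?_
  rw [abs_of_pos (by linarith [ha.trans_lt hx.out])]

/-- For every `s > 0` and `λ > 0`,
`(2/Γ(s/2+1)) ∫_λ^∞ r^{s+1} e^{r²}/(e^{r²}-1)² dr
  = (1/Γ(s/2+1)) λ^s/(e^{λ²}-1) + (1/Γ(s/2)) ∫_{λ²}^∞ r^{s/2-1}/(e^r-1) dr`. -/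
theorem statement17 (s lam : ℝ) (hs : 0 < s) (hlam : 0 < lam) :
    (2 / Real.Gamma (s / 2 + 1)) *
        ∫ r in Ioi lam, r ^ (s + 1) * Real.exp (r ^ 2) / (Real.exp (r ^ 2) - 1) ^ 2 =
      (1 / Real.Gamma (s / 2 + 1)) * (lam ^ s / (Real.exp (lam ^ 2) - 1)) +
      (1 / Real.Gamma (s / 2)) *
        ∫ r in Ioi (lam ^ 2), r ^ (s / 2 - 1) / (Real.exp r - 1) := by
  have hs2 : 0 < s / 2 := half_pos hs
  have hsq_rpow : ∀ {r : ℝ}, 0 < r → (r ^ 2) ^ (s / 2) = r ^ s := fun hr => by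
    rw [← rpow_natCast, ← rpow_mul hr.le]
    ring_nf
  have hsub : ∫ r in Ioi lam, r ^ (s + 1) * exp (r ^ 2) / (exp (r ^ 2) - 1) ^ 2 =
      (∫ u in Ioi (lam ^ 2), u ^ (s / 2) * (exp u / (exp u - 1) ^ 2)) / 2 := by
    rw [← integral_Ioi_mul_comp_sq _ hlam.le, ← integral_div]
    refine setIntegral_congr_fun measurableSet_Ioi fun r hr => ?_
    have hr : 0 < r := hlam.trans hr
    rw [smul_eq_mul, hsq_rpow hr, rpow_add_one hr.ne']
    ring
  rw [hsub, integral_Ioi_rpow_mul_exp_div_exp_sub_one_sq hs2 (by positivity), hsq_rpow hlam,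
    Gamma_add_one hs2.ne']
  have := (Gamma_pos_of_pos hs2).ne'
  field_simp
end
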